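/- arXiv:hep-th/0602057 — 2 statements merged into one kernel-verified Lean document; each statement's English description precedes it below -/
import Mathlib

section
/- Let r ≥ 1 and work in the field ℚ(u_1,…,u_r) of rational functions in r indeterminates over ℚ; set q_i = u_i^2. Let m_1 ≥ m_2 ≥ … ≥ m_r ≥ 0 be integers, and let H_m denote the complete homogeneous symmetric polynomial of degree m in the 2r+1 elements q_1,…,q_r, 1, q_1^{−1},…,q_r^{−1}. Then (the Jacobi–Trudy identity for the spinor representations of Spin(2r+1), in alternant form): det[ q_i^{m_j + r + 1 − j} − q_i^{−(m_j + r + 1 − j)} ]_{i,j=1}^{r} = ∏_{i=1}^{r} (u_i + u_i^{−1}) · det[ H_{m_j + i − j} − H_{m_j + 1 − i − j} ]_{i,j=1}^{r} · det[ u_i^{2r + 1 − 2j} − u_i^{−(2r + 1 − 2j)} ]_{i,j=1}^{r}. -/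
open Finset MvPolynomial

/-- Complete homogeneous symmetric polynomial of degree `m` (`ℤ`-indexed; zero for `m < 0`)
in the family of elements `x : ι → R`: the sum of all monomials of total degree `m`. -/
noncomputable def hpoly {R : Type*} [CommRing R] {ι : Type*} [Fintype ι] [DecidableEq ι]
    (x : ι → R) (m : ℤ) : R :=
  if m < 0 then 0
  else ∑ d ∈ (Fintype.piFinset fun _ : ι => Finset.range (m.toNat + 1)).filter
      (fun d => ∑ i, d i = m.toNat),
    ∏ i, x i ^ d i

/-!
Let `H(t) = ∑ Hₙ tⁿ = ∏_v (1 - v t)⁻¹`, the product running over the `2r+1` elements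
`q_i, 1, q_i⁻¹`. Since `∑ (q_iⁿ - q_i⁻ⁿ) tⁿ = (q_i - q_i⁻¹) t / ((1 - q_i t)(1 - q_i⁻¹ t))`, this
series is `φ_i(t) H(t)` for the polynomial
`φ_i(t) = (q_i - q_i⁻¹) t (1 - t) ∏_{j ≠ i} (1 - q_j t)(1 - q_j⁻¹ t)`.
Its coefficients vanish beyond degree `2r+1` and are antisymmetric under `d ↦ 2r+1-d`, so pairing
`d` with `2r+1-d` in the coefficient of `tˡ` gives
`q_iˡ - q_i⁻ˡ = ∑_{k<r} φ_{i,r-k} (H_{l-r+k} - H_{l-r-k-1})`: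
the alternant is the matrix `(φ_{i,r-k})` times the Jacobi–Trudy matrix. That coefficient matrix
does not depend on `m`; for `m = 0` the Jacobi–Trudy matrix is unitriangular, so its determinant
is the staircase alternant `det (q_i^{r-j} - q_i^{-(r-j)})`. Finally the relation
`(u + u⁻¹)(u^{2n+1} - u^{-(2n+1)}) = (u^{2n+2} - u^{-(2n+2)}) + (u^{2n} - u^{-2n})`
between adjacent columns turns the staircase alternant into
`∏ (u_i + u_i⁻¹) · det (u_i^{2r+1-2j} - u_i^{-(2r+1-2j)})`.
-/

namespace PowerSeries

variable {R : Type*} [CommRing R]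

theorem mk_pow_mul_one_sub_C_mul_X (a : R) : mk (fun n => a ^ n) * (1 - C a * X) = 1 := by
  simpa [rescale_mk] using congrArg (rescale a) (mk_one_mul_one_sub_eq_one R)

theorem mk_pow_sub_pow_mul (a b : R) :
    mk (fun n => a ^ n - b ^ n) * ((1 - C a * X) * (1 - C b * X)) = C (a - b) * X := by
  have hsub : mk (fun n => a ^ n - b ^ n) = mk (fun n => a ^ n) - mk (fun n => b ^ n) := by
    ext; simp
  rw [hsub, map_sub]
  linear_combination (1 - C b * X) * mk_pow_mul_one_sub_C_mul_X a -
    (1 - C a * X) * mk_pow_mul_one_sub_C_mul_X b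

open scoped Polynomial in
theorem coe_one_sub_C_add_mul_X_add_X_sq {a b : R} (hab : a * b = 1) :
    ((1 - Polynomial.C (a + b) * Polynomial.X + Polynomial.X ^ 2 : R[X]) : R⟦X⟧) =
      (1 - C a * X) * (1 - C b * X) := by
  have h : C a * C b = (1 : R⟦X⟧) := by rw [← map_mul, hab, map_one]
  push_cast [map_add]
  linear_combination (-X ^ 2 : R⟦X⟧) * h

end PowerSeries

section CompleteHomogeneous

variable {R : Type*} [CommRing R] {ι : Type*} [Fintype ι] [DecidableEq ι] (x : ι → R)

theorem hpoly_of_neg {m : ℤ} (hm : m < 0) : hpoly x m = 0 := if_pos hm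

theorem hpoly_zero : hpoly x 0 = 1 := by
  simp [hpoly, filter_singleton]

theorem mk_hpoly_eq_prod :
    PowerSeries.mk (fun n : ℕ => hpoly x n) = ∏ i, PowerSeries.mk fun n => x i ^ n := by
  ext n
  rw [PowerSeries.coeff_prod, PowerSeries.coeff_mk, hpoly, if_neg (by omega), Int.toNat_natCast]
  refine sum_nbij' Finsupp.equivFunOnFinite.symm (⇑) ?_ ?_
    (fun d _ => Finsupp.equivFunOnFinite.apply_symm_apply d)
    (fun l _ => Finsupp.equivFunOnFinite.symm_apply_apply l) (fun d _ => by simp)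
  · intro d hd
    simpa using (mem_filter.1 hd).2
  · intro l hl
    simp only [mem_finsuppAntidiag, subset_univ, and_true] at hl
    simp only [mem_filter, Fintype.mem_piFinset, mem_range, Nat.lt_succ_iff]
    exact ⟨fun i => hl ▸ single_le_sum (fun j _ => Nat.zero_le (l j)) (mem_univ i), hl⟩

theorem mk_hpoly_mul_prod_one_sub_C_mul_X :
    PowerSeries.mk (fun n : ℕ => hpoly x n) * ∏ i, (1 - PowerSeries.C (x i) * PowerSeries.X) =
      1 := by
  rw [mk_hpoly_eq_prod, ← prod_mul_distrib]
  exact prod_eq_one fun i _ => PowerSeries.mk_pow_mul_one_sub_C_mul_X (x i)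

end CompleteHomogeneous

namespace Polynomial

section CommSemiring

variable {R : Type*} [CommSemiring R]

theorem natDegree_prod_le_mul_card {ι : Type*} (s : Finset ι) (f : ι → R[X]) {n : ℕ}
    (hdeg : ∀ i ∈ s, (f i).natDegree ≤ n) : (∏ i ∈ s, f i).natDegree ≤ n * #s := by
  simpa [mul_comm] using (natDegree_prod_le s f).trans (sum_le_card_nsmul s _ n hdeg)

theorem reflect_prod_of_reflect_eq {ι : Type*} (s : Finset ι) (f : ι → R[X]) (n : ℕ)
    (hdeg : ∀ i ∈ s, (f i).natDegree ≤ n) (hrefl : ∀ i ∈ s, reflect n (f i) = f i) :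
    reflect (n * #s) (∏ i ∈ s, f i) = ∏ i ∈ s, f i := by
  classical
  induction s using Finset.induction with
  | empty => simp
  | insert a s ha ih =>
    have hdeg_prod := natDegree_prod_le_mul_card s f fun i hi => hdeg i (mem_insert_of_mem hi)
    rw [prod_insert ha, card_insert_of_notMem ha, mul_add_one, add_comm,
      reflect_mul _ _ (hdeg a (mem_insert_self a s)) hdeg_prod, hrefl a (mem_insert_self a s),
      ih (fun i hi => hdeg i (mem_insert_of_mem hi)) (fun i hi => hrefl i (mem_insert_of_mem hi))]

theorem reflect_X (N : ℕ) : reflect N (X : R[X]) = X ^ revAt N 1 := by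
  simpa using reflect_monomial (R := R) N 1

theorem coeff_coe_mul_mk_eq_sum (p : R[X]) {N : ℕ} (hN : p.natDegree < N) (h : ℤ → R)
    (hneg : ∀ n < 0, h n = 0) (l : ℕ) :
    PowerSeries.coeff l ((p : PowerSeries R) * PowerSeries.mk fun n => h n) =
      ∑ d ∈ range N, p.coeff d * h (l - d) := by
  conv_lhs => rw [p.as_sum_range' N hN]
  rw [← coeToPowerSeries.ringHom_apply, map_sum, sum_mul, map_sum]
  refine sum_congr rfl fun d _ => ?_
  rw [coeToPowerSeries.ringHom_apply, ← C_mul_X_pow_eq_monomial, coe_mul, coe_C, coe_pow, coe_X,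
    mul_assoc, PowerSeries.coeff_C_mul, PowerSeries.coeff_X_pow_mul']
  split_ifs with hd
  · simp [Nat.cast_sub hd]
  · rw [hneg _ (by omega), mul_zero]

end CommSemiring

variable {R : Type*} [CommRing R]

theorem natDegree_one_sub_C_mul_X_add_X_sq_le (a : R) : (1 - C a * X + X ^ 2).natDegree ≤ 2 := by
  compute_degree

theorem reflect_one_sub_C_mul_X_add_X_sq (a : R) :
    reflect 2 (1 - C a * X + X ^ 2) = 1 - C a * X + X ^ 2 := by
  simp only [reflect_add, reflect_sub, reflect_one, reflect_C_mul, reflect_X, reflect_monomial,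
    revAt_le, Nat.one_le_ofNat, Nat.add_one_sub_one, pow_one, le_refl, tsub_self, pow_zero]
  ring

theorem reflect_C_mul_X_sub_X_sq (a : R) :
    reflect 3 (C a * (X - X ^ 2)) = -(C a * (X - X ^ 2)) := by
  simp only [reflect_C_mul, reflect_sub, reflect_X, reflect_monomial, revAt_le,
    Nat.one_le_ofNat, Nat.add_one_sub_one, Nat.reduceLeDiff, Nat.reduceSub, pow_one]
  ring

end Polynomial

theorem Finset.sum_range_mul_eq_of_antisymm {R : Type*} [Ring R] {f : ℕ → R} (g : ℕ → R)
    (n : ℕ) (hf : ∀ d ≤ 2 * n + 1, f (2 * n + 1 - d) = -f d) :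
    ∑ d ∈ range (2 * n + 2), f d * g d =
      ∑ k ∈ range (n + 1), f (n - k) * (g (n - k) - g (n + 1 + k)) := by
  rw [show 2 * n + 2 = (n + 1) + (n + 1) by ring, sum_range_add, ← sum_range_reflect,
    ← sum_add_distrib]
  refine sum_congr rfl fun k hk => ?_
  have hk : k < n + 1 := mem_range.1 hk
  rw [show n + 1 - 1 - k = n - k by omega, show n + 1 + k = 2 * n + 1 - (n - k) by omega,
    hf (n - k) (by omega), neg_mul, mul_sub, sub_eq_add_neg]

theorem add_inv_mul_pow_sub_inv_pow {K : Type*} [Field K] {u : K} (hu : u ≠ 0) (n : ℕ) :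
    (u + u⁻¹) * (u ^ (2 * n + 1) - u⁻¹ ^ (2 * n + 1)) =
      ((u ^ 2) ^ (n + 1) - (u ^ 2)⁻¹ ^ (n + 1)) + ((u ^ 2) ^ n - (u ^ 2)⁻¹ ^ n) := by
  rw [inv_pow]
  linear_combination (u ^ (2 * n) - u⁻¹ ^ (2 * n)) * mul_inv_cancel₀ hu

theorem zpow_natCast_sub_zpow_neg {K : Type*} [DivisionRing K] (x : K) (n : ℕ) :
    x ^ (n : ℤ) - x ^ (-(n : ℤ)) = x ^ n - x⁻¹ ^ n := by
  rw [zpow_neg, zpow_natCast, inv_pow]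

namespace SpinOddJacobiTrudy

open Polynomial

section Matrices

variable {r : ℕ}

def oddAlternant {K : Type*} [DivisionRing K] (x : Fin r → K) (e : Fin r → ℤ) :
    Matrix (Fin r) (Fin r) K :=
  Matrix.of fun i j => x i ^ e j - x i ^ (-e j)

def jacobiTrudyMatrix {R : Type*} [Sub R] (H : ℤ → R) (m : Fin r → ℤ) :
    Matrix (Fin r) (Fin r) R :=
  Matrix.of fun i j : Fin r =>
    H (m j + (i.val : ℤ) - (j.val : ℤ)) - H (m j - (i.val : ℤ) - (j.val : ℤ) - 1)

theorem det_jacobiTrudyMatrix_zero {R : Type*} [CommRing R] (H : ℤ → R) (h0 : H 0 = 1)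
    (hneg : ∀ n < 0, H n = 0) : (jacobiTrudyMatrix H (0 : Fin r → ℤ)).det = 1 := by
  rw [Matrix.det_of_isLowerTriangular]
  · refine prod_eq_one fun j _ => ?_
    simp only [jacobiTrudyMatrix, Matrix.of_apply, Pi.zero_apply, zero_add, sub_self]
    rw [h0, hneg _ (by omega), sub_zero]
  · intro i j hij
    have hij : i.val < j.val := hij
    simp only [jacobiTrudyMatrix, Matrix.of_apply, Pi.zero_apply, zero_add]
    rw [hneg _ (by omega), hneg _ (by omega), sub_zero]

theorem det_one_add_subdiagonal {R : Type*} [CommRing R] :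
    (1 + Matrix.of fun k j : Fin r => if (k : ℕ) = j + 1 then (1 : R) else 0).det = 1 := by
  rw [Matrix.det_of_isLowerTriangular]
  · exact prod_eq_one fun j _ => by simp
  · intro i j hij
    have hij : i.val < j.val := hij
    simp [Matrix.one_apply_ne (Fin.ne_of_lt hij), show i.val ≠ j.val + 1 by omega]

variable {K : Type*} [Field K]

theorem diagonal_mul_oddAlternant_eq {u : Fin r → K} (hu : ∀ i, u i ≠ 0) :
    Matrix.diagonal (fun i => u i + (u i)⁻¹) *
        oddAlternant u (fun j => 2 * (r : ℤ) - 1 - 2 * (j.val : ℤ)) =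
      oddAlternant (fun i => u i ^ 2) (fun j => (r : ℤ) - j) *
        (1 + Matrix.of fun k j : Fin r => if (k : ℕ) = j + 1 then (1 : K) else 0) := by
  ext i j
  obtain ⟨n, hn⟩ : ∃ n, r = j + 1 + n := ⟨r - (j + 1), by omega⟩
  rw [Matrix.diagonal_mul, mul_add, mul_one, Matrix.add_apply, Matrix.mul_apply]
  simp only [oddAlternant, Matrix.of_apply, mul_ite, mul_one, mul_zero]
  rw [Fin.sum_univ_eq_sum_range (fun k => if k = j + 1 then
    (u i ^ 2) ^ ((r : ℤ) - k) - (u i ^ 2) ^ (-((r : ℤ) - k)) else 0), sum_ite_eq']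
  have h₁ : 2 * (r : ℤ) - 1 - 2 * j = (2 * n + 1 : ℕ) := by push_cast; omega
  have h₂ : (r : ℤ) - j = (n + 1 : ℕ) := by push_cast; omega
  rw [h₁, h₂, zpow_natCast_sub_zpow_neg, zpow_natCast_sub_zpow_neg,
    add_inv_mul_pow_sub_inv_pow (hu i)]
  split_ifs with hj
  · rw [show (r : ℤ) - (j + 1 : ℕ) = n by push_cast; omega, zpow_natCast_sub_zpow_neg]
  · obtain rfl : n = 0 := by rw [mem_range] at hj; omega
    simp

theorem det_oddAlternant_sq_staircase {u : Fin r → K} (hu : ∀ i, u i ≠ 0) :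
    (oddAlternant (fun i => u i ^ 2) fun j => (r : ℤ) - j).det =
      (∏ i, (u i + (u i)⁻¹)) *
        (oddAlternant u fun j => 2 * (r : ℤ) - 1 - 2 * (j.val : ℤ)).det := by
  have h := congrArg Matrix.det (diagonal_mul_oddAlternant_eq hu)
  rwa [Matrix.det_mul, Matrix.det_mul, Matrix.det_diagonal, det_one_add_subdiagonal, mul_one,
    eq_comm] at h

end Matrices

variable {K : Type*} [Field K] {r : ℕ} (q : Fin r → K)

def standardWeights : Fin r ⊕ (Unit ⊕ Fin r) → K :=
  Sum.elim q (Sum.elim (fun _ : Unit => 1) fun i => (q i)⁻¹)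

noncomputable def spinPoly (i : Fin r) : K[X] :=
  Polynomial.C (q i - (q i)⁻¹) * (Polynomial.X - Polynomial.X ^ 2) *
    ∏ j ∈ univ.erase i, (1 - Polynomial.C (q j + (q j)⁻¹) * Polynomial.X + Polynomial.X ^ 2)

noncomputable def spinCoeffMatrix : Matrix (Fin r) (Fin r) K :=
  Matrix.of fun i k => (spinPoly q i).coeff (r - k)

theorem natDegree_spinPoly_lt (i : Fin r) : (spinPoly q i).natDegree < 2 * r + 2 := by
  have hfac :
      (Polynomial.C (q i - (q i)⁻¹) * (Polynomial.X - Polynomial.X ^ 2)).natDegree ≤ 2 := by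
    compute_degree
  have hprod := natDegree_prod_le_mul_card (univ.erase i) _
    fun j _ => natDegree_one_sub_C_mul_X_add_X_sq_le (q j + (q j)⁻¹)
  rw [card_erase_of_mem (mem_univ i), card_univ, Fintype.card_fin] at hprod
  have := i.pos
  exact natDegree_mul_le.trans_lt (by omega)

theorem reflect_spinPoly (i : Fin r) : reflect (2 * r + 1) (spinPoly q i) = -spinPoly q i := by
  have hr : 2 * r + 1 = 3 + 2 * #(univ.erase i) := by
    rw [card_erase_of_mem (mem_univ i), card_univ, Fintype.card_fin]
    have := i.pos
    omega
  rw [spinPoly, hr, reflect_mul _ _ (by compute_degree!)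
    (natDegree_prod_le_mul_card _ _ fun j _ => natDegree_one_sub_C_mul_X_add_X_sq_le _),
    reflect_C_mul_X_sub_X_sq, reflect_prod_of_reflect_eq _ _ 2
      (fun j _ => natDegree_one_sub_C_mul_X_add_X_sq_le _)
      (fun j _ => reflect_one_sub_C_mul_X_add_X_sq _), neg_mul]

theorem coeff_spinPoly_antisymm (i : Fin r) {d : ℕ} (hd : d ≤ 2 * r + 1) :
    (spinPoly q i).coeff (2 * r + 1 - d) = -(spinPoly q i).coeff d := by
  simpa [coeff_reflect, revAt_le hd] using congrArg (Polynomial.coeff · d) (reflect_spinPoly q i)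

theorem coeff_spinPoly_zero (i : Fin r) : (spinPoly q i).coeff 0 = 0 := by
  simp [spinPoly, mul_coeff_zero]

variable {q}

theorem prod_standardWeights_one_sub_C_mul_X (i : Fin r) :
    ∏ v, (1 - PowerSeries.C (standardWeights q v) * PowerSeries.X) =
      ((1 - PowerSeries.C (q i) * PowerSeries.X) * (1 - PowerSeries.C (q i)⁻¹ * PowerSeries.X)) *
        ((1 - PowerSeries.X) * ∏ j ∈ univ.erase i,
          (1 - PowerSeries.C (q j) * PowerSeries.X) *
            (1 - PowerSeries.C (q j)⁻¹ * PowerSeries.X)) := by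
  simp only [Fintype.prod_sum_type, standardWeights, Sum.elim_inl, Sum.elim_inr, map_one, one_mul,
    Fintype.prod_unique]
  conv_rhs => rw [mul_left_comm, mul_prod_erase univ (fun j =>
    (1 - PowerSeries.C (q j) * PowerSeries.X) * (1 - PowerSeries.C (q j)⁻¹ * PowerSeries.X))
    (mem_univ i), prod_mul_distrib]
  ring

theorem coe_spinPoly (hq : ∀ i, q i ≠ 0) (i : Fin r) :
    (spinPoly q i : PowerSeries K) = PowerSeries.C (q i - (q i)⁻¹) * PowerSeries.X *
      ((1 - PowerSeries.X) * ∏ j ∈ univ.erase i,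
        (1 - PowerSeries.C (q j) * PowerSeries.X) *
          (1 - PowerSeries.C (q j)⁻¹ * PowerSeries.X)) := by
  rw [spinPoly, ← coeToPowerSeries.ringHom_apply]
  simp only [map_mul, map_prod, coeToPowerSeries.ringHom_apply,
    PowerSeries.coe_one_sub_C_add_mul_X_add_X_sq (mul_inv_cancel₀ (hq _))]
  push_cast
  ring

theorem coe_spinPoly_mul_mk_hpoly (hq : ∀ i, q i ≠ 0) (i : Fin r) :
    (spinPoly q i : PowerSeries K) * PowerSeries.mk (fun n : ℕ => hpoly (standardWeights q) n) =
      PowerSeries.mk fun n => q i ^ n - (q i)⁻¹ ^ n := by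
  have hH := mk_hpoly_mul_prod_one_sub_C_mul_X (standardWeights q)
  rw [prod_standardWeights_one_sub_C_mul_X i] at hH
  rw [coe_spinPoly hq i, ← PowerSeries.mk_pow_sub_pow_mul (q i)]
  linear_combination (PowerSeries.mk fun n => q i ^ n - (q i)⁻¹ ^ n) * hH

theorem pow_sub_inv_pow_eq_sum (hq : ∀ i, q i ≠ 0) (i : Fin r) (l : ℕ) :
    q i ^ l - (q i)⁻¹ ^ l = ∑ k ∈ range r, (spinPoly q i).coeff (r - k) *
      (hpoly (standardWeights q) (l - r + k) - hpoly (standardWeights q) (l - r - k - 1)) := by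
  calc q i ^ l - (q i)⁻¹ ^ l
      = PowerSeries.coeff l (PowerSeries.mk fun n => q i ^ n - (q i)⁻¹ ^ n) := by simp
    _ = ∑ d ∈ range (2 * r + 2),
          (spinPoly q i).coeff d * hpoly (standardWeights q) (l - d) := by
      rw [← coe_spinPoly_mul_mk_hpoly hq, coeff_coe_mul_mk_eq_sum _ (natDegree_spinPoly_lt q i) _
        fun n hn => hpoly_of_neg _ hn]
    _ = ∑ k ∈ range (r + 1), (spinPoly q i).coeff (r - k) *
          (hpoly (standardWeights q) (l - (r - k : ℕ)) -
            hpoly (standardWeights q) (l - (r + 1 + k : ℕ))) :=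
      sum_range_mul_eq_of_antisymm _ r fun d hd => coeff_spinPoly_antisymm q i hd
    _ = _ := by
      rw [sum_range_succ, Nat.sub_self, coeff_spinPoly_zero, zero_mul, add_zero]
      refine sum_congr rfl fun k hk => ?_
      rw [Nat.cast_sub (mem_range.1 hk).le]
      push_cast
      congr 3 <;> ring

theorem oddAlternant_eq_spinCoeffMatrix_mul (hq : ∀ i, q i ≠ 0) (m : Fin r → ℤ)
    (hm : ∀ j, 0 ≤ m j + r - j) :
    oddAlternant q (fun j => m j + r - j) =
      spinCoeffMatrix q * jacobiTrudyMatrix (hpoly (standardWeights q)) m := by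
  ext i j
  obtain ⟨l, hl⟩ := Int.eq_ofNat_of_zero_le (hm j)
  rw [oddAlternant, Matrix.of_apply, hl, zpow_natCast_sub_zpow_neg, pow_sub_inv_pow_eq_sum hq,
    Matrix.mul_apply, ← Fin.sum_univ_eq_sum_range]
  refine sum_congr rfl fun k _ => ?_
  simp only [spinCoeffMatrix, jacobiTrudyMatrix, Matrix.of_apply]
  congr 3 <;> omega

theorem det_oddAlternant_eq_mul_det_jacobiTrudyMatrix (hq : ∀ i, q i ≠ 0) (m : Fin r → ℤ)
    (hm : ∀ j, 0 ≤ m j + r - j) :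
    (oddAlternant q fun j => m j + r - j).det =
      (oddAlternant q fun j => (r : ℤ) - j).det *
        (jacobiTrudyMatrix (hpoly (standardWeights q)) m).det := by
  have h₀ := oddAlternant_eq_spinCoeffMatrix_mul hq 0 fun j => by simp
  simp only [Pi.zero_apply, zero_add] at h₀
  rw [oddAlternant_eq_spinCoeffMatrix_mul hq m hm, h₀, Matrix.det_mul, Matrix.det_mul,
    det_jacobiTrudyMatrix_zero _ (hpoly_zero _) fun n hn => hpoly_of_neg _ hn, mul_one]

theorem det_oddAlternant_sq_eq {u : Fin r → K} (hu : ∀ i, u i ≠ 0) (m : Fin r → ℤ)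
    (hm : ∀ j, 0 ≤ m j + r - j) :
    (oddAlternant (fun i => u i ^ 2) fun j => m j + r - j).det =
      (∏ i, (u i + (u i)⁻¹)) *
        (jacobiTrudyMatrix (hpoly (standardWeights fun i => u i ^ 2)) m).det *
        (oddAlternant u fun j => 2 * (r : ℤ) - 1 - 2 * (j.val : ℤ)).det := by
  rw [det_oddAlternant_eq_mul_det_jacobiTrudyMatrix (fun i => pow_ne_zero 2 (hu i)) m hm,
    det_oddAlternant_sq_staircase hu, mul_right_comm]

end SpinOddJacobiTrudy

theorem spin_odd_spinor_jacobi_trudy_general (r : ℕ)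
    (m : Fin r → ℤ) (hnonneg : ∀ j, 0 ≤ m j) :
    let K := FractionRing (MvPolynomial (Fin r) ℚ)
    let u : Fin r → K := fun i => algebraMap (MvPolynomial (Fin r) ℚ) K (X i)
    let q : Fin r → K := fun i => u i ^ 2
    let H : ℤ → K := hpoly (Sum.elim q (Sum.elim (fun _ : Unit => 1) fun i => (q i)⁻¹))
    Matrix.det (Matrix.of fun i j : Fin r =>
        q i ^ (m j + r - (j.val : ℤ)) - q i ^ (-(m j + r - (j.val : ℤ)))) =
    (∏ i : Fin r, (u i + (u i)⁻¹)) *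
    Matrix.det (Matrix.of fun i j : Fin r =>
        H (m j + (i.val : ℤ) - (j.val : ℤ)) - H (m j - (i.val : ℤ) - (j.val : ℤ) - 1)) *
    Matrix.det (Matrix.of fun i j : Fin r =>
        u i ^ (2 * (r : ℤ) - 1 - 2 * (j.val : ℤ)) -
        u i ^ (-(2 * (r : ℤ) - 1 - 2 * (j.val : ℤ)))) := by
  intro K u q H
  have hu : ∀ i, u i ≠ 0 := fun i =>
    (map_ne_zero_iff _ (IsFractionRing.injective _ K)).2 (X_ne_zero i)
  exact SpinOddJacobiTrudy.det_oddAlternant_sq_eq hu m fun j => by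
    have := hnonneg j
    omega

/-- Jacobi–Trudy identity for the spinor representations of Spin(2r+1), in alternant form. -/
theorem spin_odd_spinor_jacobi_trudy (r : ℕ) (hr : 1 ≤ r)
    (m : Fin r → ℤ) (hanti : Antitone m) (hnonneg : ∀ j, 0 ≤ m j) :
    let K := FractionRing (MvPolynomial (Fin r) ℚ)
    let u : Fin r → K := fun i => algebraMap (MvPolynomial (Fin r) ℚ) K (X i)
    let q : Fin r → K := fun i => u i ^ 2
    let H : ℤ → K := hpoly (Sum.elim q (Sum.elim (fun _ : Unit => 1) fun i => (q i)⁻¹))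
    Matrix.det (Matrix.of fun i j : Fin r =>
        q i ^ (m j + r - (j.val : ℤ)) - q i ^ (-(m j + r - (j.val : ℤ)))) =
    (∏ i : Fin r, (u i + (u i)⁻¹)) *
    Matrix.det (Matrix.of fun i j : Fin r =>
        H (m j + (i.val : ℤ) - (j.val : ℤ)) - H (m j - (i.val : ℤ) - (j.val : ℤ) - 1)) *
    Matrix.det (Matrix.of fun i j : Fin r =>
        u i ^ (2 * (r : ℤ) - 1 - 2 * (j.val : ℤ)) -
        u i ^ (-(2 * (r : ℤ) - 1 - 2 * (j.val : ℤ)))) :=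
  spin_odd_spinor_jacobi_trudy_general r m hnonneg
end

section
/- Let r ≥ 1 and work in the field ℚ(q_1,…,q_r) of rational functions in r indeterminates over ℚ. Then the Weyl denominator of Sp(2r) factors as det[ q_i^{r + 1 − j} − q_i^{−(r + 1 − j)} ]_{i,j=1}^{r} = ∏_{i=1}^{r} (q_i − q_i^{−1}) · det[ (q_i + q_i^{−1})^{r − j} ]_{i,j=1}^{r}. -/
/-!
Write `S n` for the rescaled Chebyshev polynomials of the second kind, `S (n + 2) = X S (n + 1) - S n`.
Since `(x - x⁻¹) S n (x + x⁻¹) = x ^ (n + 1) - x ^ -(n + 1)`, the `i`-th row of the left-hand matrix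
is `qᵢ - qᵢ⁻¹` times the values of `S (r - 1 - j)` at `tᵢ = qᵢ + qᵢ⁻¹`. As `S n` is monic of degree
`n`, column operations turn `det [S (r - 1 - j) (tᵢ)]` into `det [tᵢ ^ (r - 1 - j)]`.
-/

theorem add_inv_mul_zpow_sub_zpow_neg {K : Type*} [Field K] {x : K} (hx : x ≠ 0) (m : ℤ) :
    (x + x⁻¹) * (x ^ m - x ^ (-m)) =
      x ^ (m + 1) - x ^ (-(m + 1)) + (x ^ (m - 1) - x ^ (-(m - 1))) := by
  simp only [neg_add, neg_sub, zpow_add₀ hx, zpow_sub₀ hx, zpow_neg, zpow_one]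
  field_simp
  ring

namespace Polynomial.Chebyshev

section Degree

variable (R : Type*) [CommRing R] [Nontrivial R]

theorem degree_S_natCast (n : ℕ) : (S R n).degree = n := by
  induction n using Nat.twoStepInduction with
  | zero => simp
  | one => simp
  | more n ih1 ih2 =>
    have hX : (X * S R (n + 1 : ℕ)).degree = ↑(n + 2) := by
      rw [mul_comm, degree_mul_X, ih2]; norm_cast
    push_cast at hX ⊢
    rw [S_add_two, degree_sub_eq_left_of_degree_lt] <;> rw [hX]
    rw [ih1]; norm_cast; omega

theorem natDegree_S_natCast (n : ℕ) : (S R n).natDegree = n :=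
  natDegree_eq_of_degree_eq_some (degree_S_natCast R n)

theorem monic_S_natCast (n : ℕ) : (S R n).Monic := by
  induction n using Nat.twoStepInduction with
  | zero => simp
  | one => simp
  | more n ih1 ih2 =>
    push_cast at ih2 ⊢
    rw [S_add_two]
    refine (monic_X.mul ih2).sub_of_left ?_
    rw [mul_comm, degree_mul_X, ← Nat.cast_one, ← Nat.cast_add, degree_S_natCast,
      degree_S_natCast]
    norm_cast; omega

end Degree

theorem sub_inv_mul_S_eval_add_inv {K : Type*} [Field K] {x : K} (hx : x ≠ 0) (n : ℤ) :
    (x - x⁻¹) * (S K n).eval (x + x⁻¹) = x ^ (n + 1) - x ^ (-(n + 1)) := by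
  induction n using Polynomial.Chebyshev.induct with
  | zero => simp
  | one =>
    simp only [S_one, eval_X, Int.reduceAdd, zpow_ofNat, Int.reduceNeg, zpow_neg]
    field_simp
    ring
  | add_two n ih1 ih2 =>
    rw [S_add_two, eval_sub, eval_mul, eval_X]
    linear_combination (norm := ring_nf)
      (x + x⁻¹) * ih1 - ih2 + add_inv_mul_zpow_sub_zpow_neg hx (n + 2)
  | neg_add_one n ih1 ih2 =>
    rw [S_sub_one, eval_sub, eval_mul, eval_X]
    linear_combination (norm := ring_nf)
      (x + x⁻¹) * ih1 - ih2 + add_inv_mul_zpow_sub_zpow_neg hx (-n + 1)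

end Polynomial.Chebyshev

namespace Matrix

variable {R : Type*} [CommRing R] {n : ℕ}

theorem det_eval_matrixOfPolynomials_rev_eq_sign_mul_det_vandermonde (v : Fin n → R)
    (p : Fin n → Polynomial R) (h_deg : ∀ j : Fin n, (p j).natDegree = n - 1 - j)
    (h_monic : ∀ j, (p j).Monic) :
    (of fun i j => (p j).eval (v i)).det =
      Equiv.Perm.sign (Fin.revPerm : Equiv.Perm (Fin n)) * (vandermonde v).det := by
  have h_deg_rev : ∀ j : Fin n, (p (Fin.rev j)).natDegree = j := fun j => by
    rw [h_deg, Fin.val_rev]; omega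
  rw [det_eval_matrixOfPolynomials_eq_det_vandermonde v _ h_deg_rev (fun j => h_monic _),
    ← det_permute']
  congr 1
  ext i j
  simp

theorem det_eval_matrixOfPolynomials_rev_eq_det_pow (v : Fin n → R)
    (p : Fin n → Polynomial R) (h_deg : ∀ j : Fin n, (p j).natDegree = n - 1 - j)
    (h_monic : ∀ j, (p j).Monic) :
    (of fun i j => (p j).eval (v i)).det = (of fun i j : Fin n => v i ^ (n - 1 - j)).det := by
  nontriviality R
  have h_pow := det_eval_matrixOfPolynomials_rev_eq_sign_mul_det_vandermonde v
    (fun j => Polynomial.X ^ (n - 1 - j.val)) (fun j => Polynomial.natDegree_X_pow _)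
    (fun j => Polynomial.monic_X_pow _)
  simp only [Polynomial.eval_pow, Polynomial.eval_X] at h_pow
  rw [h_pow, det_eval_matrixOfPolynomials_rev_eq_sign_mul_det_vandermonde v p h_deg h_monic]

end Matrix

open Finset MvPolynomial

open Polynomial.Chebyshev in
theorem sp_weyl_denominator_factorization_general (r : ℕ) :
    let K := FractionRing (MvPolynomial (Fin r) ℚ)
    let q : Fin r → K := fun i => algebraMap (MvPolynomial (Fin r) ℚ) K (X i)
    Matrix.det (Matrix.of fun i j : Fin r =>
        q i ^ ((r : ℤ) - (j.val : ℤ)) - q i ^ (-((r : ℤ) - (j.val : ℤ)))) =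
    (∏ i : Fin r, (q i - (q i)⁻¹)) *
    Matrix.det (Matrix.of fun i j : Fin r =>
        (q i + (q i)⁻¹) ^ (r - 1 - j.val)) := by
  intro K q
  have hq : ∀ i, q i ≠ 0 := fun i =>
    (map_ne_zero_iff _ (IsFractionRing.injective (MvPolynomial (Fin r) ℚ) K)).mpr (X_ne_zero i)
  have h_entry : ∀ i j : Fin r, q i ^ ((r : ℤ) - (j.val : ℤ)) - q i ^ (-((r : ℤ) - (j.val : ℤ))) =
      (q i - (q i)⁻¹) * (S K (r - 1 - j.val : ℕ)).eval (q i + (q i)⁻¹) := fun i j => by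
    rw [sub_inv_mul_S_eval_add_inv (hq i)]
    have : ((r - 1 - j.val : ℕ) : ℤ) + 1 = r - j.val := by have := j.isLt; omega
    rw [this]
  simp_rw [h_entry]
  refine (Matrix.det_mul_column (fun i => q i - (q i)⁻¹) _).trans (congrArg _ ?_)
  exact Matrix.det_eval_matrixOfPolynomials_rev_eq_det_pow _ _
    (fun j => natDegree_S_natCast K _) (fun j => monic_S_natCast K _)

/-- Factorization of the Weyl denominator of Sp(2r):
det[qᵢ^{r+1−j} − qᵢ^{−(r+1−j)}] = ∏ᵢ (qᵢ − qᵢ⁻¹) · det[(qᵢ + qᵢ⁻¹)^{r−j}]. -/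
theorem sp_weyl_denominator_factorization (r : ℕ) (hr : 1 ≤ r) :
    let K := FractionRing (MvPolynomial (Fin r) ℚ)
    let q : Fin r → K := fun i => algebraMap (MvPolynomial (Fin r) ℚ) K (X i)
    Matrix.det (Matrix.of fun i j : Fin r =>
        q i ^ ((r : ℤ) - (j.val : ℤ)) - q i ^ (-((r : ℤ) - (j.val : ℤ)))) =
    (∏ i : Fin r, (q i - (q i)⁻¹)) *
    Matrix.det (Matrix.of fun i j : Fin r =>
        (q i + (q i)⁻¹) ^ (r - 1 - j.val)) :=
  sp_weyl_denominator_factorization_general r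
end
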